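/- arXiv:2601.08038 — 2 statements merged into one kernel-verified Lean document; each statement's English description precedes it below -/
import Mathlib

section
/- For integers t ≥ 1 and a, b ≥ 1, the double alternating sum ∑_{i=1}^{a} ∑_{j=1}^{b} (-1)^{i+j+1} · C(a-i+b-j, a-i) · C(t-1, i-1) · C(t-1, j-1) equals the single alternating sum ∑_{i=1}^{a} (-1)^{b+i+1} · C(t-1, i-1) · binom(t-2-a+i, b-1). -/
/-- Generalized binomial coefficient `x(x-1)⋯(x-k+1)/k!` for integer `x` and
integer `k` (zero when `k < 0`). -/
def ibinom (x k : ℤ) : ℤ :=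
  if k < 0 then 0
  else if 0 ≤ x then (x.toNat.choose k.toNat : ℤ)
  else (-1) ^ k.toNat * ((((-x) + k - 1).toNat.choose k.toNat : ℤ))

/-- Classical binomial coefficient for integer arguments: `0` when `k > n` or
when either argument is negative. -/
def C (n k : ℤ) : ℤ :=
  if 0 ≤ n ∧ 0 ≤ k then (n.toNat.choose k.toNat : ℤ) else 0

/-!
Each inner sum over `j` is a Chu–Vandermonde convolution in disguise: the binomial
`C(m + s - k, m)` equals `(-1)^(s-k) binom(-(m+1), s-k)`, so
`∑_k (-1)^k C(n, k) C(m + s - k, m) = (-1)^s binom(n - 1 - m, s)`, with `n = t - 1`,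
`m = a - i`, `s = b - 1`; on `ℤ`, `ibinom x k` is Mathlib's `Ring.choose x k`.
-/

open Finset

theorem Ring.choose_neg_natCast_add_one {R : Type*} [CommRing R] [BinomialRing R] (m l : ℕ) :
    Ring.choose (-(m + 1 : R)) l = (-1) ^ l * ((m + l).choose m : R) := by
  rw [Ring.choose_neg, show (m + 1 : R) + l - 1 = ((m + l : ℕ) : R) by push_cast; ring,
    Ring.choose_natCast, Nat.choose_symm_add, Units.smul_def, Int.coe_negOnePow_natCast,
    zsmul_eq_mul]
  push_cast
  rfl

theorem sum_range_neg_one_pow_mul_choose_mul_choose {R : Type*} [CommRing R] [BinomialRing R]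
    (r : R) (m s : ℕ) :
    ∑ k ∈ range (s + 1), (-1) ^ k * Ring.choose r k * ((m + s - k).choose m : R) =
      (-1) ^ s * Ring.choose (r - 1 - m) s := by
  rw [show r - 1 - m = r + -(m + 1 : R) by ring, Ring.add_choose_eq _ (Commute.all _ _),
    Nat.sum_antidiagonal_eq_sum_range_succ (fun k l => Ring.choose r k * Ring.choose _ l), mul_sum]
  refine sum_congr rfl fun k hk => ?_
  obtain ⟨j, rfl⟩ := Nat.exists_eq_add_of_le (Nat.le_of_lt_succ (mem_range.mp hk))
  have hsign : (-1 : R) ^ j * (-1) ^ j = 1 := by rw [← mul_pow]; simp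
  rw [Ring.choose_neg_natCast_add_one, Nat.add_sub_cancel_left,
    show m + (k + j) - k = m + j by omega, pow_add]
  linear_combination -(-1 : R) ^ k * Ring.choose r k * ((m + j).choose m : R) * hsign

theorem C_natCast (n k : ℕ) : C n k = n.choose k := by
  simp [C]

theorem ibinom_natCast (x : ℤ) (k : ℕ) : ibinom x k = Ring.choose x k := by
  unfold ibinom
  rw [if_neg (by omega), Int.toNat_natCast]
  split_ifs with hx
  · lift x to ℕ using hx
    rw [Int.toNat_natCast, Ring.choose_natCast]
  · obtain ⟨y, rfl⟩ := Int.exists_eq_neg_ofNat (by omega : x ≤ 0)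
    rw [Ring.choose_neg, ← Int.toNat_of_nonneg (by omega : 0 ≤ (y : ℤ) + k - 1),
      Ring.choose_natCast, Units.smul_def, Int.coe_negOnePow_natCast, neg_neg, smul_eq_mul]

theorem sum_Icc_neg_one_pow_mul_C_mul_C (n m s : ℕ) :
    ∑ j ∈ Icc 1 (s + 1), (-1 : ℤ) ^ (j + 1) * C ((m : ℤ) + (s + 1) - j) m * C n ((j : ℤ) - 1) =
      (-1) ^ s * ibinom ((n : ℤ) - 1 - m) s := by
  rw [ibinom_natCast, ← sum_range_neg_one_pow_mul_choose_mul_choose (n : ℤ) m s,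
    ← Ico_add_one_right_eq_Icc, sum_Ico_eq_sum_range, Nat.add_sub_cancel]
  refine sum_congr rfl fun k hk => ?_
  rw [show (m : ℤ) + (s + 1) - ((1 + k : ℕ) : ℤ) = ((m + s - k : ℕ) : ℤ) by
      have := mem_range.mp hk; omega,
    show ((1 + k : ℕ) : ℤ) - 1 = (k : ℤ) by push_cast; ring, C_natCast, C_natCast,
    Ring.choose_natCast, pow_add]
  ring

theorem stmt3_general (t a b : ℕ) (ht : 1 ≤ t) (hb : 1 ≤ b) :
    (∑ i ∈ Finset.Icc 1 a, ∑ j ∈ Finset.Icc 1 b,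
        (-1 : ℤ) ^ (i + j + 1) * C ((a : ℤ) - i + b - j) ((a : ℤ) - i) *
          C ((t : ℤ) - 1) ((i : ℤ) - 1) * C ((t : ℤ) - 1) ((j : ℤ) - 1)) =
      ∑ i ∈ Finset.Icc 1 a,
        (-1 : ℤ) ^ (b + i + 1) * C ((t : ℤ) - 1) ((i : ℤ) - 1) *
          ibinom ((t : ℤ) - 2 - a + i) ((b : ℤ) - 1) := by
  obtain ⟨n, rfl⟩ := Nat.exists_eq_add_of_le' ht
  obtain ⟨s, rfl⟩ := Nat.exists_eq_add_of_le' hb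
  refine sum_congr rfl fun i hi => ?_
  obtain ⟨m, rfl⟩ := Nat.exists_eq_add_of_le (mem_Icc.mp hi).2
  have hinner := sum_Icc_neg_one_pow_mul_C_mul_C n m s
  push_cast at hinner ⊢
  simp only [add_sub_cancel_right, add_sub_cancel_left] at hinner ⊢
  calc _ = (-1) ^ i * C n (i - 1) * ∑ j ∈ Icc 1 (s + 1),
        (-1 : ℤ) ^ (j + 1) * C ((m : ℤ) + (s + 1) - j) m * C n ((j : ℤ) - 1) := by
        rw [mul_sum]
        refine sum_congr rfl fun j _ => ?_
        ring_nf
    _ = _ := by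
        rw [hinner, show (n : ℤ) + 1 - 2 - (i + m) + i = n - 1 - m by ring]
        ring

theorem stmt3 (t a b : ℕ) (ht : 1 ≤ t) (ha : 1 ≤ a) (hb : 1 ≤ b) :
    (∑ i ∈ Finset.Icc 1 a, ∑ j ∈ Finset.Icc 1 b,
        (-1 : ℤ) ^ (i + j + 1) * C ((a : ℤ) - i + b - j) ((a : ℤ) - i) *
          C ((t : ℤ) - 1) ((i : ℤ) - 1) * C ((t : ℤ) - 1) ((j : ℤ) - 1)) =
      ∑ i ∈ Finset.Icc 1 a,
        (-1 : ℤ) ^ (b + i + 1) * C ((t : ℤ) - 1) ((i : ℤ) - 1) *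
          ibinom ((t : ℤ) - 2 - a + i) ((b : ℤ) - 1) :=
  stmt3_general t a b ht hb
end

section
/- For natural numbers t ≥ 1 and 0 ≤ a, b ≤ t, the double alternating sum ∑_{i=1}^{a} ∑_{j=1}^{b} (-1)^{i+j+1} · C(a-i+b-j, a-i) · C(t-1, i-1) · C(t-1, j-1) equals (-1)^{a+b+1} · ∑_{i=1}^{min(a,b)} C(t-1-i, a-i) · C(t-1-i, b-i). -/
/-!
Put `m = t - 1`, `A = a - 1`, `B = b - 1`. After reversing both summation indices, the left side
is, up to the sign `(-1)^(a+b+1)`, the coefficient of `x^A y^B` in `(1+x)^m (1+y)^m / (1+x+y)`.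
Since `(1+x)(1+y) = (1+x+y) + xy`, this coefficient equals `C(m-1, A) C(m-1, B)` plus the
coefficient of `x^(A-1) y^(B-1)` in `(1+x)^(m-1) (1+y)^(m-1) / (1+x+y)`; iterating peels off the
terms of the right side one at a time.
-/

open Finset

theorem sum_antidiagonal_succ_add_sum_antidiagonal {R : Type*} [CommSemiring R]
    (u v g : ℕ → R) (n : ℕ) :
    ∑ x ∈ antidiagonal (n + 1), u x.1 * g x.2 + ∑ x ∈ antidiagonal n, v x.1 * g x.2 =
      u 0 * g (n + 1) + ∑ x ∈ antidiagonal n, (u (x.1 + 1) + v x.1) * g x.2 := by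
  simp only [Nat.sum_antidiagonal_succ, add_mul, sum_add_distrib, add_assoc]

/-- The coefficient of `x^p y^q` in `1 / (1 + x + y)`. -/
def invTrinomialCoeff (p q : ℕ) : ℤ := (-1) ^ (p + q) * (p + q).choose p

theorem invTrinomialCoeff_comm (p q : ℕ) : invTrinomialCoeff p q = invTrinomialCoeff q p := by
  rw [invTrinomialCoeff, invTrinomialCoeff, add_comm, Nat.choose_symm_add]

@[simp]
theorem invTrinomialCoeff_zero_zero : invTrinomialCoeff 0 0 = 1 := by
  simp [invTrinomialCoeff]

theorem invTrinomialCoeff_zero_succ_add (q : ℕ) :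
    invTrinomialCoeff 0 (q + 1) + invTrinomialCoeff 0 q = 0 := by
  simp [invTrinomialCoeff, pow_succ]

theorem invTrinomialCoeff_succ_zero_add (p : ℕ) :
    invTrinomialCoeff (p + 1) 0 + invTrinomialCoeff p 0 = 0 := by
  rw [invTrinomialCoeff_comm, invTrinomialCoeff_comm p, invTrinomialCoeff_zero_succ_add]

theorem invTrinomialCoeff_succ_succ_add (p q : ℕ) :
    invTrinomialCoeff (p + 1) (q + 1) + invTrinomialCoeff p (q + 1) +
      invTrinomialCoeff (p + 1) q = 0 := by
  have h := Nat.choose_succ_succ' (p + q + 1) p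
  rw [show p + q + 1 + 1 = p + 1 + (q + 1) by ring] at h
  simp only [invTrinomialCoeff, h, show p + (q + 1) = p + q + 1 by ring,
    show p + 1 + q = p + q + 1 by ring, Nat.cast_add, pow_succ]
  ring

/-- The coefficient of `x^A y^B` in `f(x) g(y) / (1 + x + y)`. -/
def invTrinomialConv (f g : ℕ → ℤ) (A B : ℕ) : ℤ :=
  ∑ x ∈ antidiagonal A, (∑ y ∈ antidiagonal B, invTrinomialCoeff x.1 y.1 * g y.2) * f x.2

theorem invTrinomialConv_comm (f g : ℕ → ℤ) (A B : ℕ) :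
    invTrinomialConv f g A B = invTrinomialConv g f B A := by
  simp only [invTrinomialConv, sum_mul]
  rw [sum_comm]
  refine sum_congr rfl fun y _ => sum_congr rfl fun x _ => ?_
  rw [invTrinomialCoeff_comm]
  ring

theorem invTrinomialConv_zero_zero (f g : ℕ → ℤ) :
    invTrinomialConv f g 0 0 = f 0 * g 0 := by
  simp [invTrinomialConv, mul_comm]

theorem invTrinomialConv_zero_succ_add (f g : ℕ → ℤ) (B : ℕ) :
    invTrinomialConv f g 0 (B + 1) + invTrinomialConv f g 0 B = f 0 * g (B + 1) := by
  simp only [invTrinomialConv, Nat.antidiagonal_zero, sum_singleton, ← add_mul]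
  rw [sum_antidiagonal_succ_add_sum_antidiagonal]
  simp [invTrinomialCoeff_zero_succ_add, mul_comm]

theorem invTrinomialConv_succ_succ_add (f g : ℕ → ℤ) (A B : ℕ) :
    invTrinomialConv f g (A + 1) (B + 1) + invTrinomialConv f g A (B + 1) +
      invTrinomialConv f g (A + 1) B = f (A + 1) * g (B + 1) := by
  set K : ℕ → ℕ → ℤ := fun p n =>
    ∑ y ∈ antidiagonal n, invTrinomialCoeff p y.1 * g y.2
  have row_zero : K 0 (B + 1) + K 0 B = g (B + 1) := by
    rw [sum_antidiagonal_succ_add_sum_antidiagonal]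
    simp [invTrinomialCoeff_zero_succ_add]
  have row_succ (p : ℕ) : K (p + 1) (B + 1) + K (p + 1) B + K p (B + 1) = 0 := by
    have h := sum_antidiagonal_succ_add_sum_antidiagonal
      (fun q => invTrinomialCoeff (p + 1) q + invTrinomialCoeff p q)
      (invTrinomialCoeff (p + 1)) g B
    simp only [invTrinomialCoeff_succ_zero_add, zero_mul, zero_add, add_mul, sum_add_distrib,
      invTrinomialCoeff_succ_succ_add, sum_const_zero] at h
    linear_combination h
  have h := sum_antidiagonal_succ_add_sum_antidiagonal (fun p => K p (B + 1) + K p B)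
    (fun p => K p (B + 1)) f A
  simp only [row_zero, row_succ, zero_mul, sum_const_zero, add_zero, add_mul,
    sum_add_distrib] at h
  simp only [invTrinomialConv]
  linear_combination h

theorem invTrinomialConv_succ_left_of_pascal {f f' : ℕ → ℤ} (h0 : f' 0 = f 0)
    (hsucc : ∀ i, f' (i + 1) = f i + f (i + 1)) (g : ℕ → ℤ) (A B : ℕ) :
    invTrinomialConv f' g (A + 1) B =
      invTrinomialConv f g (A + 1) B + invTrinomialConv f g A B := by
  simp only [invTrinomialConv, Nat.sum_antidiagonal_succ', h0, hsucc, mul_add, sum_add_distrib]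
  ring

abbrev chooseConv (m : ℕ) : ℕ → ℕ → ℤ :=
  invTrinomialConv (fun i => (m.choose i : ℤ)) (fun i => (m.choose i : ℤ))

theorem chooseConv_comm (m A B : ℕ) : chooseConv m A B = chooseConv m B A :=
  invTrinomialConv_comm _ _ A B

theorem chooseConv_succ_zero_left (m B : ℕ) : chooseConv (m + 1) 0 B = m.choose B := by
  induction B with
  | zero => simp [invTrinomialConv_zero_zero]
  | succ B ih =>
    have h : chooseConv (m + 1) 0 (B + 1) + chooseConv (m + 1) 0 B =
        (m + 1).choose 0 * (m + 1).choose (B + 1) :=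
      invTrinomialConv_zero_succ_add _ _ B
    rw [ih, Nat.choose_succ_succ', Nat.choose_zero_right] at h
    push_cast at h
    linear_combination h

theorem chooseConv_succ_succ_succ (m A B : ℕ) :
    chooseConv (m + 1) (A + 1) (B + 1) =
      m.choose (A + 1) * m.choose (B + 1) + chooseConv m A B := by
  have pascal := invTrinomialConv_succ_left_of_pascal (f := fun i => (m.choose i : ℤ))
    (f' := fun i => ((m + 1).choose i : ℤ)) (by simp) (fun i => by simp [Nat.choose_succ_succ'])
  have expand (X : ℕ) (g : ℕ → ℤ) :
      invTrinomialConv g (fun i => ((m + 1).choose i : ℤ)) X (B + 1) =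
        invTrinomialConv g (fun i => (m.choose i : ℤ)) X (B + 1) +
          invTrinomialConv g (fun i => (m.choose i : ℤ)) X B := by
    rw [invTrinomialConv_comm, pascal, invTrinomialConv_comm, invTrinomialConv_comm _ _ B]
  have recursion : chooseConv m (A + 1) (B + 1) + chooseConv m A (B + 1) + chooseConv m (A + 1) B =
      m.choose (A + 1) * m.choose (B + 1) :=
    invTrinomialConv_succ_succ_add _ _ A B
  simp only [chooseConv, pascal, expand]
  linear_combination recursion

theorem chooseConv_eq_sum (m A B : ℕ) (hA : A ≤ m) (hB : B ≤ m) :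
    chooseConv m A B =
      ∑ k ∈ range (min A B + 1),
        ((m - 1 - k).choose (A - k) * (m - 1 - k).choose (B - k) : ℤ) := by
  induction m generalizing A B with
  | zero =>
    obtain rfl : A = 0 := by omega
    obtain rfl : B = 0 := by omega
    simp [invTrinomialConv_zero_zero]
  | succ m ih =>
    cases A with
    | zero => simp [chooseConv_succ_zero_left]
    | succ A =>
      cases B with
      | zero => simp [chooseConv_comm _ _ 0, chooseConv_succ_zero_left]
      | succ B =>
        rw [chooseConv_succ_succ_succ, ih A B (by omega) (by omega), Nat.succ_min_succ,
          sum_range_succ' _ (min A B + 1), add_comm]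
        simp [Nat.sub_sub, add_comm 1]

theorem sum_Icc_one_eq_sum_range {M : Type*} [AddCommMonoid M] (G : ℕ → M) (n : ℕ) :
    ∑ i ∈ Icc 1 n, G i = ∑ k ∈ range n, G (k + 1) := by
  rw [range_eq_Ico, sum_Ico_add' G, zero_add, Ico_add_one_right_eq_Icc]

theorem sum_antidiagonal_eq_sum_Icc_one {M : Type*} [AddCommMonoid M] (F : ℕ × ℕ → M)
    (n : ℕ) :
    ∑ x ∈ antidiagonal n, F x = ∑ i ∈ Icc 1 (n + 1), F (n + 1 - i, i - 1) := by
  rw [← Nat.sum_antidiagonal_swap, Nat.sum_antidiagonal_eq_sum_range_succ_mk,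
    sum_Icc_one_eq_sum_range]
  simp

theorem sum_Icc_sign_mul_choose_eq_chooseConv (m A B : ℕ) :
    ∑ i ∈ Icc 1 (A + 1), ∑ j ∈ Icc 1 (B + 1),
        (-1 : ℤ) ^ (i + j + 1) * (A + 1 - i + (B + 1 - j)).choose (A + 1 - i) *
          m.choose (i - 1) * m.choose (j - 1) =
      (-1) ^ (A + 1 + (B + 1) + 1) * chooseConv m A B := by
  rw [chooseConv, invTrinomialConv, sum_antidiagonal_eq_sum_Icc_one, mul_sum]
  refine sum_congr rfl fun i hi => ?_
  rw [sum_mul, sum_antidiagonal_eq_sum_Icc_one, mul_sum]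
  refine sum_congr rfl fun j hj => ?_
  rw [mem_Icc] at hi hj
  have sign : (-1 : ℤ) ^ (i + j + 1) =
      (-1) ^ (A + 1 + (B + 1) + 1) * (-1) ^ (A + 1 - i + (B + 1 - j)) := by
    rw [← pow_add, show A + 1 + (B + 1) + 1 + (A + 1 - i + (B + 1 - j)) =
      i + j + 1 + 2 * (A + 1 - i + (B + 1 - j)) by omega, pow_add _ (i + j + 1), pow_mul]
    simp
  rw [sign, invTrinomialCoeff]
  ring

theorem stmt6_general (t a b : ℕ) (ha : a ≤ t) (hb : b ≤ t) :
    (∑ i ∈ Finset.Icc 1 a, ∑ j ∈ Finset.Icc 1 b,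
        (-1 : ℤ) ^ (i + j + 1) * Nat.choose (a - i + (b - j)) (a - i) *
          Nat.choose (t - 1) (i - 1) * Nat.choose (t - 1) (j - 1)) =
      (-1 : ℤ) ^ (a + b + 1) *
        ∑ i ∈ Finset.Icc 1 (min a b),
          (Nat.choose (t - 1 - i) (a - i) * Nat.choose (t - 1 - i) (b - i) : ℤ) := by
  obtain _ | A := a
  · simp
  obtain _ | B := b
  · simp
  obtain _ | m := t
  · omega
  rw [Nat.add_sub_cancel, sum_Icc_sign_mul_choose_eq_chooseConv,
    chooseConv_eq_sum m A B (by omega) (by omega), Nat.succ_min_succ, sum_Icc_one_eq_sum_range]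
  congr 1
  refine sum_congr rfl fun k _ => ?_
  simp [Nat.sub_sub, add_comm 1]

theorem stmt6 (t a b : ℕ) (ht : 1 ≤ t) (ha : a ≤ t) (hb : b ≤ t) :
    (∑ i ∈ Finset.Icc 1 a, ∑ j ∈ Finset.Icc 1 b,
        (-1 : ℤ) ^ (i + j + 1) * Nat.choose (a - i + (b - j)) (a - i) *
          Nat.choose (t - 1) (i - 1) * Nat.choose (t - 1) (j - 1)) =
      (-1 : ℤ) ^ (a + b + 1) *
        ∑ i ∈ Finset.Icc 1 (min a b),
          (Nat.choose (t - 1 - i) (a - i) * Nat.choose (t - 1 - i) (b - i) : ℤ) :=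
  stmt6_general t a b ha hb
end
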